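/- Let D be a proper domain in a Banach space and let x, y ∈ D with k_D(x,y) ≤ 1. Then every c₀-quasigeodesic γ from x to y is an 18c₀e^{9c₀}-uniform arc; in particular ℓ(γ) ≤ 18c₀e^{9c₀}·|x − y|. -/

import Mathlib

open Set ENNReal

variable {E : Type*} [NormedAddCommGroup E]

/-- Distance to the boundary (= distance to the complement, for open sets). -/
noncomputable def dD (D : Set E) (z : E) : ℝ := Metric.infDist z Dᶜ

/-- A continuous curve with image in `D`, parametrized on `[a,b]`. -/
structure CurveIn (D : Set E) (a b : ℝ) (γ : ℝ → E) : Prop where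
  le : a ≤ b
  cont : ContinuousOn γ (Set.Icc a b)
  mem : ∀ t ∈ Set.Icc a b, γ t ∈ D

/-- Arc length of `γ` on `[s,t]` (as a real number; finite iff rectifiable). -/
noncomputable def len (γ : ℝ → E) (s t : ℝ) : ℝ :=
  (eVariationOn γ (Set.Icc s t)).toReal

/-- Quasihyperbolic length of `γ` over a parameter set, defined as the supremum of
weighted Riemann sums `Σ |γ(t_{i+1}) - γ(t_i)| / d_D(γ(t_i))` over monotone sequences. -/
noncomputable def qhVar (D : Set E) (γ : ℝ → E) (s : Set ℝ) : ℝ≥0∞ :=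
  ⨆ p : ℕ × { u : ℕ → ℝ // Monotone u ∧ ∀ i, u i ∈ s },
    ∑ i ∈ Finset.range p.1,
      ENNReal.ofReal (dist (γ (p.2.1 (i + 1))) (γ (p.2.1 i)) / dD D (γ (p.2.1 i)))

/-- Quasihyperbolic distance: infimum of quasihyperbolic lengths of curves in `D`
joining `x` and `y`. -/
noncomputable def qhDist (D : Set E) (x y : E) : ℝ :=
  (⨅ q : { q : ℝ × ℝ × (ℝ → E) //
      CurveIn D q.1 q.2.1 q.2.2 ∧ q.2.2 q.1 = x ∧ q.2.2 q.2.1 = y },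
    qhVar D q.1.2.2 (Set.Icc q.1.1 q.1.2.1)).toReal

/-- Inner (intrinsic) distance in `D`: infimum of arc lengths of curves in `D`
joining `x` and `y`. -/
noncomputable def innerDist (D : Set E) (x y : E) : ℝ :=
  (⨅ q : { q : ℝ × ℝ × (ℝ → E) //
      CurveIn D q.1 q.2.1 q.2.2 ∧ q.2.2 q.1 = x ∧ q.2.2 q.2.1 = y },
    eVariationOn q.1.2.2 (Set.Icc q.1.1 q.1.2.1)).toReal

/-- A proper domain: open, connected, and not the whole space. -/
def IsProperDomain (D : Set E) : Prop := IsOpen D ∧ IsConnected D ∧ D ≠ Set.univ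

/-- `(D, k_D)` is δ-Gromov hyperbolic (Gromov product formulation). -/
def GromovHyp (D : Set E) (δ : ℝ) : Prop :=
  ∀ x ∈ D, ∀ y ∈ D, ∀ z ∈ D, ∀ p ∈ D,
    (qhDist D p x + qhDist D p z - qhDist D x z) / 2 ≥
      min ((qhDist D p x + qhDist D p y - qhDist D x y) / 2)
          ((qhDist D p y + qhDist D p z - qhDist D y z) / 2) - δ

/-- A `c`-quasigeodesic in `D`: `ℓ_k(γ[s,t]) ≤ c·k_D(γ s, γ t)` for all parameters. -/
def IsQuasigeodesic (D : Set E) (c : ℝ) (a b : ℝ) (γ : ℝ → E) : Prop :=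
  CurveIn D a b γ ∧
    ∀ s t, a ≤ s → s ≤ t → t ≤ b →
      qhVar D γ (Set.Icc s t) ≤ ENNReal.ofReal (c * qhDist D (γ s) (γ t))

/-- An `h`-short arc in `D`: `ℓ_k(γ[s,t]) ≤ k_D(γ s, γ t) + h` for all parameters. -/
def ShortArc (D : Set E) (h : ℝ) (a b : ℝ) (γ : ℝ → E) : Prop :=
  CurveIn D a b γ ∧
    ∀ s t, a ≤ s → s ≤ t → t ≤ b →
      qhVar D γ (Set.Icc s t) ≤ ENNReal.ofReal (qhDist D (γ s) (γ t) + h)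

/-- The coefficient `c^λ_{x,y} = min{1 + λ/(2 k_D(x,y)), 9/8}`. -/
noncomputable def lamCoef (D : Set E) (lam : ℝ) (x y : E) : ℝ :=
  min (1 + lam / (2 * qhDist D x y)) (9 / 8)

/-- A λ-curve: a `c^λ_{x,y}`-quasigeodesic with endpoints `x = γ a`, `y = γ b`. -/
def IsLambdaCurve (D : Set E) (lam : ℝ) (a b : ℝ) (γ : ℝ → E) : Prop :=
  CurveIn D a b γ ∧
    ∀ s t, a ≤ s → s ≤ t → t ≤ b →
      qhVar D γ (Set.Icc s t) ≤
        ENNReal.ofReal (lamCoef D lam (γ a) (γ b) * qhDist D (γ s) (γ t))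

/-- A `c`-cone arc (John curve): double cone condition with constant `c`. -/
def ConeArc (D : Set E) (c : ℝ) (a b : ℝ) (γ : ℝ → E) : Prop :=
  ∀ t ∈ Set.Icc a b, min (len γ a t) (len γ t b) ≤ c * dD D (γ t)

/-- A `c`-John domain. -/
def IsJohnDomain (D : Set E) (c : ℝ) : Prop :=
  ∀ x ∈ D, ∀ y ∈ D, ∃ a b γ, CurveIn D a b γ ∧
    eVariationOn γ (Set.Icc a b) ≠ ⊤ ∧ γ a = x ∧ γ b = y ∧ ConeArc D c a b γ

/-- A `c`-uniform arc: cone condition plus `ℓ(γ) ≤ c·|γ a − γ b|`. -/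
def IsUniformArc (D : Set E) (c : ℝ) (a b : ℝ) (γ : ℝ → E) : Prop :=
  CurveIn D a b γ ∧ ConeArc D c a b γ ∧ len γ a b ≤ c * ‖γ a - γ b‖

/-- A `c`-inner uniform arc: cone condition plus the Gehring–Hayman inequality
`ℓ(γ) ≤ c·σ_D(γ a, γ b)`. -/
def IsInnerUniformArc (D : Set E) (c : ℝ) (a b : ℝ) (γ : ℝ → E) : Prop :=
  CurveIn D a b γ ∧ ConeArc D c a b γ ∧ len γ a b ≤ c * innerDist D (γ a) (γ b)

/-- A `c`-inner uniform domain. -/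
def IsInnerUniform (D : Set E) (c : ℝ) : Prop :=
  ∀ x ∈ D, ∀ y ∈ D, ∃ a b γ, γ a = x ∧ γ b = y ∧ IsInnerUniformArc D c a b γ


/-!
Write `K = k_D(x, y) ≤ 1`, so that every subarc of `γ` has quasihyperbolic length at most `c₀K ≤ c₀`.
A one-step partition gives `|γ(t) - x| ≤ c₀K·d(x)`, hence `d(γ(t)) ≤ 2c₀·d(x)` along `γ` and
`ℓ(γ[a, t]) ≤ 2c₀·d(x)·c₀K`. Along a fine partition `log d` drops by at most twice the quasihyperbolic
increment, so `d(x) ≤ e^{2c₀}·d(γ(t))`. Finally `K·d(x) ≤ 2|x - y|`: the segment `[x, y]` gives this when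
`|x - y| ≤ d(x)/2`, and `K ≤ 1` otherwise. Thus `γ` is even a `2c₀²e^{2c₀}`-uniform arc.
-/

lemma exists_monotone_partition_dist_lt {F : Type*} [PseudoMetricSpace F] {f : ℝ → F}
    {a b ε : ℝ} (hab : a ≤ b) (hf : ContinuousOn f (Icc a b)) (hε : 0 < ε) :
    ∃ (n : ℕ) (u : ℕ → ℝ), Monotone u ∧ (∀ i, u i ∈ Icc a b) ∧ u 0 = a ∧ u n = b ∧
      ∀ i, dist (f (u (i + 1))) (f (u i)) < ε := by
  obtain ⟨δ, hδ, hfδ⟩ := Metric.uniformContinuousOn_iff.1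
    (isCompact_Icc.uniformContinuousOn_of_continuous hf) ε hε
  have hh : 0 < δ / 2 := half_pos hδ
  set u : ℕ → ℝ := fun i => min b (a + i * (δ / 2))
  have hu : ∀ i, u i ∈ Icc a b := fun i =>
    ⟨le_min hab (le_add_of_nonneg_right (by positivity)), min_le_left _ _⟩
  refine ⟨⌈(b - a) / (δ / 2)⌉₊, u, fun i j hij => ?_, hu, by simp [u, hab], ?_, fun i => ?_⟩
  · exact min_le_min_left _ (by gcongr)
  · refine min_eq_left ?_
    have := Nat.le_ceil ((b - a) / (δ / 2))
    rw [div_le_iff₀ hh] at this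
    linarith
  · refine hfδ _ (hu _) _ (hu _) ((abs_min_sub_min_le_max _ _ _ _).trans_lt ?_)
    push_cast
    rw [sub_self, abs_zero, show a + (i + 1) * (δ / 2) - (a + i * (δ / 2)) = δ / 2 by ring,
      abs_of_pos hh, max_eq_right hh.le]
    exact half_lt_self hδ

lemma eVariationOn_lineMap_le [NormedSpace ℝ E] (x y : E) :
    eVariationOn (AffineMap.lineMap x y : ℝ → E) (Icc 0 1) ≤ ENNReal.ofReal (dist x y) := by
  calc eVariationOn ((AffineMap.lineMap x y : ℝ → E) ∘ id) (Icc 0 1)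
      ≤ nndist x y * eVariationOn id (Icc (0 : ℝ) 1) :=
        ((lipschitzWith_lineMap (𝕜 := ℝ) x y).lipschitzOnWith (s := univ)).comp_eVariationOn_le
          (mapsTo_univ _ _)
    _ ≤ ENNReal.ofReal (dist x y) := by
        simp [eVariationOn_id_Icc, edist_dist]

section

variable {D : Set E} {γ : ℝ → E}

lemma dD_nonneg (D : Set E) (z : E) : 0 ≤ dD D z := Metric.infDist_nonneg

lemma dD_le_dD_add_dist (D : Set E) (z w : E) : dD D z ≤ dD D w + dist z w :=
  Metric.infDist_le_infDist_add_dist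

lemma dD_pos (hD : IsOpen D) (hD' : D ≠ univ) {z : E} (hz : z ∈ D) : 0 < dD D z :=
  (hD.isClosed_compl.notMem_iff_infDist_pos (nonempty_compl.2 hD')).1 (by simpa using hz)

lemma mem_of_dD_pos {z : E} (hz : 0 < dD D z) : z ∈ D := by
  by_contra h
  exact hz.ne' (Metric.infDist_zero_of_mem h)

lemma CurveIn.mono {a b s t : ℝ} (hγ : CurveIn D a b γ) (hs : a ≤ s) (hst : s ≤ t) (ht : t ≤ b) :
    CurveIn D s t γ :=
  ⟨hst, hγ.cont.mono (Icc_subset_Icc hs ht), fun r hr => hγ.mem r ⟨hs.trans hr.1, hr.2.trans ht⟩⟩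

lemma IsUniformArc.mono {c c' a b : ℝ} (h : IsUniformArc D c a b γ) (hc : c ≤ c') :
    IsUniformArc D c' a b γ :=
  ⟨h.1, fun t ht => (h.2.1 t ht).trans (mul_le_mul_of_nonneg_right hc (dD_nonneg D _)),
    h.2.2.trans (mul_le_mul_of_nonneg_right hc (norm_nonneg _))⟩

lemma sum_le_qhVar {S : Set ℝ} {u : ℕ → ℝ} (hu : Monotone u) (huS : ∀ i, u i ∈ S) (n : ℕ) :
    ∑ i ∈ Finset.range n, ENNReal.ofReal (dist (γ (u (i + 1))) (γ (u i)) / dD D (γ (u i)))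
      ≤ qhVar D γ S :=
  le_iSup_of_le (ι := ℕ × {u : ℕ → ℝ // Monotone u ∧ ∀ i, u i ∈ S}) (n, ⟨u, hu, huS⟩) le_rfl

lemma qhVar_mono {S T : Set ℝ} (h : S ⊆ T) : qhVar D γ S ≤ qhVar D γ T :=
  iSup_le fun p => sum_le_qhVar p.2.2.1 (fun i => h (p.2.2.2 i)) p.1

lemma ofReal_dist_div_dD_le_qhVar {s t : ℝ} (hst : s ≤ t) :
    ENNReal.ofReal (dist (γ t) (γ s) / dD D (γ s)) ≤ qhVar D γ (Icc s t) := by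
  have hu : Monotone fun i : ℕ => if i = 0 then s else t :=
    monotone_nat_of_le_succ fun i => by cases i <;> simp [hst]
  simpa using sum_le_qhVar (D := D) (γ := γ) hu (fun i => by split_ifs <;> simp [hst]) 1

lemma qhDist_le_of_qhVar_le {a b Q : ℝ} (hγ : CurveIn D a b γ) (hQ : 0 ≤ Q)
    (h : qhVar D γ (Icc a b) ≤ ENNReal.ofReal Q) : qhDist D (γ a) (γ b) ≤ Q :=
  ENNReal.toReal_le_of_le_ofReal hQ ((iInf_le _ ⟨(a, b, γ), hγ, rfl, rfl⟩).trans h)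

lemma dD_le_one_add_mul_dD {s t Q : ℝ} (hst : s ≤ t) (hs : 0 < dD D (γ s)) (hQ : 0 ≤ Q)
    (h : qhVar D γ (Icc s t) ≤ ENNReal.ofReal Q) : dD D (γ t) ≤ (1 + Q) * dD D (γ s) := by
  have hdist : dist (γ t) (γ s) / dD D (γ s) ≤ Q :=
    (ENNReal.ofReal_le_ofReal_iff hQ).1 ((ofReal_dist_div_dD_le_qhVar hst).trans h)
  rw [div_le_iff₀ hs] at hdist
  linarith [dD_le_dD_add_dist D (γ t) (γ s)]

lemma eVariationOn_le_mul_qhVar {S : Set ℝ} {M : ℝ} (hpos : ∀ r ∈ S, 0 < dD D (γ r))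
    (hM : ∀ r ∈ S, dD D (γ r) ≤ M) :
    eVariationOn γ S ≤ ENNReal.ofReal M * qhVar D γ S := by
  refine iSup_le fun ⟨n, u, hu, huS⟩ => ?_
  calc ∑ i ∈ Finset.range n, edist (γ (u (i + 1))) (γ (u i))
      ≤ ∑ i ∈ Finset.range n,
          ENNReal.ofReal M * ENNReal.ofReal (dist (γ (u (i + 1))) (γ (u i)) / dD D (γ (u i))) := by
        refine Finset.sum_le_sum fun i _ => ?_
        have hd := hpos _ (huS i)
        rw [edist_dist, ← ENNReal.ofReal_mul (hd.le.trans (hM _ (huS i))), mul_div_assoc']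
        refine ENNReal.ofReal_le_ofReal ?_
        rw [le_div_iff₀ hd, mul_comm]
        exact mul_le_mul_of_nonneg_right (hM _ (huS i)) dist_nonneg
    _ ≤ ENNReal.ofReal M * qhVar D γ S := by
        rw [← Finset.mul_sum]
        gcongr
        exact sum_le_qhVar hu huS n

lemma qhVar_le_inv_mul_eVariationOn {S : Set ℝ} {m : ℝ} (hm : 0 < m)
    (hd : ∀ r ∈ S, m ≤ dD D (γ r)) :
    qhVar D γ S ≤ (ENNReal.ofReal m)⁻¹ * eVariationOn γ S := by
  refine iSup_le fun ⟨n, u, hu, huS⟩ => ?_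
  calc ∑ i ∈ Finset.range n, ENNReal.ofReal (dist (γ (u (i + 1))) (γ (u i)) / dD D (γ (u i)))
      ≤ ∑ i ∈ Finset.range n, (ENNReal.ofReal m)⁻¹ * edist (γ (u (i + 1))) (γ (u i)) := by
        refine Finset.sum_le_sum fun i _ => ?_
        rw [edist_dist, ← ENNReal.div_eq_inv_mul, ← ENNReal.ofReal_div_of_pos hm]
        exact ENNReal.ofReal_le_ofReal (div_le_div_of_nonneg_left dist_nonneg hm (hd _ (huS i)))
    _ ≤ (ENNReal.ofReal m)⁻¹ * eVariationOn γ S := by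
        rw [← Finset.mul_sum]
        gcongr
        exact eVariationOn.sum_le hu huS

lemma qhDist_le_of_two_mul_dist_le [NormedSpace ℝ E] {x y : E} (hx : 0 < dD D x)
    (hxy : 2 * dist x y ≤ dD D x) : qhDist D x y ≤ 2 * dist x y / dD D x := by
  set σ : ℝ → E := ⇑(AffineMap.lineMap (k := ℝ) x y)
  have hσ : ∀ t ∈ Icc (0 : ℝ) 1, dD D x / 2 ≤ dD D (σ t) := fun t ht => by
    have hnear : dist x (σ t) ≤ dist x y := by
      rw [dist_left_lineMap, Real.norm_eq_abs, abs_of_nonneg ht.1]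
      exact mul_le_of_le_one_left dist_nonneg ht.2
    linarith [dD_le_dD_add_dist D x (σ t)]
  have hcurve : CurveIn D 0 1 σ :=
    ⟨zero_le_one, AffineMap.lineMap_continuous.continuousOn,
      fun t ht => mem_of_dD_pos ((half_pos hx).trans_le (hσ t ht))⟩
  have hvar : qhVar D σ (Icc 0 1) ≤ ENNReal.ofReal (2 * dist x y / dD D x) := by
    grw [qhVar_le_inv_mul_eVariationOn (half_pos hx) hσ, eVariationOn_lineMap_le,
      ← ENNReal.div_eq_inv_mul, ← ENNReal.ofReal_div_of_pos (half_pos hx)]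
    exact le_of_eq (by ring_nf)
  simpa [σ] using qhDist_le_of_qhVar_le hcurve (by positivity) hvar

lemma qhDist_mul_dD_le [NormedSpace ℝ E] {x y : E} (hx : 0 < dD D x) (hk : qhDist D x y ≤ 1) :
    qhDist D x y * dD D x ≤ 2 * dist x y := by
  by_cases hxy : 2 * dist x y ≤ dD D x
  · rw [← le_div_iff₀ hx]
    exact qhDist_le_of_two_mul_dist_le hx hxy
  · have hK : 0 ≤ qhDist D x y := ENNReal.toReal_nonneg
    nlinarith

lemma log_dD_sub_log_dD_le {z w : E} (hz : 0 < dD D z) (hzw : dist w z ≤ dD D z / 2) :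
    Real.log (dD D z) - Real.log (dD D w) ≤ 2 * (dist w z / dD D z) := by
  have hlip := dD_le_dD_add_dist D z w
  rw [dist_comm] at hlip
  have hw : dD D z / 2 ≤ dD D w := by linarith
  have hw0 : 0 < dD D w := (half_pos hz).trans_le hw
  rw [← Real.log_div hz.ne' hw0.ne']
  calc Real.log (dD D z / dD D w)
      ≤ dD D z / dD D w - 1 := Real.log_le_sub_one_of_pos (by positivity)
    _ = (dD D z - dD D w) / dD D w := by field_simp
    _ ≤ dist w z / (dD D z / 2) := by
        gcongr
        linarith
    _ = 2 * (dist w z / dD D z) := by ring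

lemma dD_le_exp_mul_dD (hD : IsOpen D) (hD' : D ≠ univ) {s t Q : ℝ} (hγ : CurveIn D s t γ)
    (hQ : 0 ≤ Q) (h : qhVar D γ (Icc s t) ≤ ENNReal.ofReal Q) :
    dD D (γ s) ≤ Real.exp (2 * Q) * dD D (γ t) := by
  obtain ⟨r₀, hr₀, hmin⟩ := isCompact_Icc.exists_isMinOn (nonempty_Icc.2 hγ.le)
    ((Metric.continuous_infDist_pt Dᶜ).comp_continuousOn hγ.cont)
  have hm : 0 < dD D (γ r₀) := dD_pos hD hD' (hγ.mem r₀ hr₀)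
  have hmin' : ∀ r ∈ Icc s t, dD D (γ r₀) ≤ dD D (γ r) := fun r hr => hmin hr
  obtain ⟨n, u, hu, huI, hu0, hun, hstep⟩ :=
    exists_monotone_partition_dist_lt hγ.le hγ.cont (half_pos hm)
  have hsum : ∑ i ∈ Finset.range n, dist (γ (u (i + 1))) (γ (u i)) / dD D (γ (u i)) ≤ Q := by
    rw [← ENNReal.ofReal_le_ofReal_iff hQ, ENNReal.ofReal_sum_of_nonneg
      (fun i _ => div_nonneg dist_nonneg (dD_nonneg D _))]
    exact (sum_le_qhVar hu huI n).trans h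
  have hlog : Real.log (dD D (γ s)) - Real.log (dD D (γ t)) ≤ 2 * Q := by
    rw [← hu0, ← hun, ← Finset.sum_range_sub' (fun i => Real.log (dD D (γ (u i))))]
    calc ∑ i ∈ Finset.range n, (Real.log (dD D (γ (u i))) - Real.log (dD D (γ (u (i + 1)))))
        ≤ ∑ i ∈ Finset.range n, 2 * (dist (γ (u (i + 1))) (γ (u i)) / dD D (γ (u i))) :=
          Finset.sum_le_sum fun i _ => log_dD_sub_log_dD_le (hm.trans_le (hmin' _ (huI i)))
            ((hstep i).le.trans (by linarith [hmin' _ (huI i)]))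
      _ ≤ 2 * Q := by rw [← Finset.mul_sum]; linarith
  have hs := dD_pos hD hD' (hγ.mem s (left_mem_Icc.2 hγ.le))
  have ht := dD_pos hD hD' (hγ.mem t (right_mem_Icc.2 hγ.le))
  calc dD D (γ s) = Real.exp (Real.log (dD D (γ s))) := (Real.exp_log hs).symm
    _ ≤ Real.exp (2 * Q + Real.log (dD D (γ t))) := Real.exp_le_exp.2 (by linarith)
    _ = Real.exp (2 * Q) * dD D (γ t) := by rw [Real.exp_add, Real.exp_log ht]

theorem IsQuasigeodesic.isUniformArc [NormedSpace ℝ E] (hD : IsOpen D) (hD' : D ≠ univ)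
    {c a b : ℝ} (hc : 1 ≤ c) (hγ : IsQuasigeodesic D c a b γ) (hk : qhDist D (γ a) (γ b) ≤ 1) :
    IsUniformArc D (2 * c ^ 2 * Real.exp (2 * c)) a b γ := by
  obtain ⟨hcurve, hqg⟩ := hγ
  set K := qhDist D (γ a) (γ b)
  have hK : 0 ≤ K := ENNReal.toReal_nonneg
  have hQ : 0 ≤ c * K := by positivity
  have hd : 0 < dD D (γ a) := dD_pos hD hD' (hcurve.mem a (left_mem_Icc.2 hcurve.le))
  have hvar : ∀ t ∈ Icc a b, qhVar D γ (Icc a t) ≤ ENNReal.ofReal (c * K) := fun t ht =>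
    (qhVar_mono (Icc_subset_Icc le_rfl ht.2)).trans (hqg a b le_rfl hcurve.le le_rfl)
  have hdD : ∀ t ∈ Icc a b, dD D (γ t) ≤ 2 * c * dD D (γ a) := fun t ht => by
    have hQc : c * K ≤ c := mul_le_of_le_one_right (by linarith) hk
    nlinarith [dD_le_one_add_mul_dD ht.1 hd hQ (hvar t ht)]
  have hlen : ∀ t ∈ Icc a b, len γ a t ≤ 2 * c * dD D (γ a) * (c * K) := fun t ht => by
    have hsub : Icc a t ⊆ Icc a b := Icc_subset_Icc le_rfl ht.2
    refine ENNReal.toReal_le_of_le_ofReal (by positivity) ?_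
    rw [ENNReal.ofReal_mul (by positivity)]
    grw [eVariationOn_le_mul_qhVar (fun r hr => dD_pos hD hD' (hcurve.mem r (hsub hr)))
      (fun r hr => hdD r (hsub hr)), hvar t ht]
  have hcone : ∀ t ∈ Icc a b, dD D (γ a) ≤ Real.exp (2 * c) * dD D (γ t) := fun t ht => by
    grw [dD_le_exp_mul_dD hD hD' (hcurve.mono le_rfl ht.1 ht.2) hQ (hvar t ht),
      mul_le_of_le_one_right (by positivity) hk]
    exact dD_nonneg D _
  have hKd : K * dD D (γ a) ≤ 2 * ‖γ a - γ b‖ := by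
    rw [← dist_eq_norm]
    exact qhDist_mul_dD_le hd hk
  refine ⟨hcurve, fun t ht => (min_le_left _ _).trans ?_, ?_⟩
  · calc len γ a t ≤ 2 * c * dD D (γ a) * (c * K) := hlen t ht
      _ ≤ 2 * c ^ 2 * dD D (γ a) := by
          nlinarith [mul_le_mul_of_nonneg_left hk (mul_nonneg (sq_nonneg c) hd.le)]
      _ ≤ 2 * c ^ 2 * (Real.exp (2 * c) * dD D (γ t)) := by grw [hcone t ht]
      _ = 2 * c ^ 2 * Real.exp (2 * c) * dD D (γ t) := by ring
  · have hexp : 2 ≤ Real.exp (2 * c) := by linarith [Real.add_one_le_exp (2 * c)]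
    calc len γ a b ≤ 2 * c * dD D (γ a) * (c * K) := hlen b (right_mem_Icc.2 hcurve.le)
      _ ≤ 2 * c ^ 2 * 2 * ‖γ a - γ b‖ := by nlinarith
      _ ≤ 2 * c ^ 2 * Real.exp (2 * c) * ‖γ a - γ b‖ := by gcongr

end

theorem stmt18_general {E : Type*} [NormedAddCommGroup E] [NormedSpace ℝ E]
    (D : Set E) (hD : IsProperDomain D) (c₀ : ℝ) (hc₀ : 1 ≤ c₀)
    (x y : E) (hk : qhDist D x y ≤ 1)
    (a b : ℝ) (γ : ℝ → E) (hγ : IsQuasigeodesic D c₀ a b γ)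
    (hxa : γ a = x) (hyb : γ b = y) :
    IsUniformArc D (18 * c₀ * Real.exp (9 * c₀)) a b γ := by
  subst hxa hyb
  refine (hγ.isUniformArc hD.1 hD.2.2 hc₀ hk).mono ?_
  have hexp : c₀ * Real.exp (2 * c₀) ≤ Real.exp (9 * c₀) :=
    calc c₀ * Real.exp (2 * c₀) ≤ Real.exp c₀ * Real.exp (2 * c₀) := by
          gcongr
          linarith [Real.add_one_le_exp c₀]
      _ ≤ Real.exp (9 * c₀) := by rw [← Real.exp_add]; gcongr; linarith
  nlinarith [Real.exp_pos (2 * c₀)]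

theorem stmt18 {E : Type*} [NormedAddCommGroup E] [NormedSpace ℝ E] [CompleteSpace E]
    (D : Set E) (hD : IsProperDomain D) (c₀ : ℝ) (hc₀ : 1 ≤ c₀)
    (x y : E) (hx : x ∈ D) (hy : y ∈ D) (hk : qhDist D x y ≤ 1)
    (a b : ℝ) (γ : ℝ → E) (hγ : IsQuasigeodesic D c₀ a b γ)
    (hxa : γ a = x) (hyb : γ b = y) :
    IsUniformArc D (18 * c₀ * Real.exp (9 * c₀)) a b γ :=
  stmt18_general D hD c₀ hc₀ x y hk a b γ hγ hxa hyb
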